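/- In a category of spaces, every triquotient surjection p: Z → Y is a regular epimorphism: it is the coequalizer of its kernel pair p_1, p_2: Z ×_Y Z ⇉ Z. -/

import Mathlib

open CategoryTheory CategoryTheory.Limits

universe u v

variable {C : Type v} [Category.{v} C] [HasFiniteProducts C]

/-- The presheaf `S^X : Y ↦ C(Y × X, S)`. -/
noncomputable def pow (S X : C) : Cᵒᵖ ⥤ Type v where
  obj Z := (Opposite.unop Z ⨯ X) ⟶ S
  map f := TypeCat.ofHom (fun u => prod.map f.unop (𝟙 X) ≫ u)
  map_id Z := by ext u; simp
  map_comp f g := by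
    ext u
    show prod.map ((f ≫ g).unop) (𝟙 X) ≫ u
      = prod.map g.unop (𝟙 X) ≫ prod.map f.unop (𝟙 X) ≫ u
    rw [← Category.assoc, prod.map_map]; simp

/-- Contravariant action `S^f : S^Y ⟶ S^X` for `f : X ⟶ Y`. -/
noncomputable def powMap (S : C) {X Y : C} (f : X ⟶ Y) : pow S Y ⟶ pow S X where
  app Z := TypeCat.ofHom (fun u => prod.map (𝟙 _) f ≫ u)
  naturality Z W g := by
    ext u
    change (Opposite.unop Z ⨯ Y ⟶ S) at u
    show prod.map (𝟙 _) f ≫ prod.map g.unop (𝟙 Y) ≫ u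
      = prod.map g.unop (𝟙 X) ≫ prod.map (𝟙 _) f ≫ u
    rw [← Category.assoc, ← Category.assoc, prod.map_map, prod.map_map]
    simp

@[simp] lemma powMap_id (S X : C) : powMap S (𝟙 X) = 𝟙 (pow S X) := by
  apply NatTrans.ext; funext Z; ext u; simp [powMap, pow]; rfl

@[simp] lemma powMap_comp (S : C) {X Y Z : C} (f : X ⟶ Y) (g : Y ⟶ Z) :
    powMap S (f ≫ g) = powMap S g ≫ powMap S f := by
  apply NatTrans.ext; funext W; ext u
  change (Opposite.unop W ⨯ Z ⟶ S) at u
  show prod.map (𝟙 _) (f ≫ g) ≫ u = prod.map (𝟙 _) f ≫ prod.map (𝟙 _) g ≫ u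
  rw [← Category.assoc, prod.map_map]; simp

/-- The presheaf `Y ↦ Nat(S^X, S^Y)`, i.e. the double exponential `(yS)^{S^X}`
described by its points. -/
noncomputable def doublePresheaf (S X : C) : Cᵒᵖ ⥤ Type v where
  obj Y := pow S X ⟶ pow S (Opposite.unop Y)
  map h := TypeCat.ofHom (fun δ => δ ≫ powMap S h.unop)
  map_id Y := by ext δ; simp
  map_comp h k := by ext δ; simp

section LatticeOps

variable {S : C}

/-- Pointwise top element. -/
noncomputable def elTop (top : ⊤_ C ⟶ S) {W : C} : W ⟶ S := terminal.from W ≫ top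
/-- Pointwise bottom element. -/
noncomputable def elBot (bot : ⊤_ C ⟶ S) {W : C} : W ⟶ S := terminal.from W ≫ bot
/-- Pointwise binary meet. -/
noncomputable def elMeet (meet : S ⨯ S ⟶ S) {W : C} (u v : W ⟶ S) : W ⟶ S :=
  prod.lift u v ≫ meet
/-- Pointwise binary join. -/
noncomputable def elJoin (join : S ⨯ S ⟶ S) {W : C} (u v : W ⟶ S) : W ⟶ S :=
  prod.lift u v ≫ join

/-- A natural transformation `S^X ⟶ S^Y` is a distributive lattice homomorphism if it
preserves the (pointwise) finite meets and joins. -/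
def IsDLHom (top bot : ⊤_ C ⟶ S) (meet join : S ⨯ S ⟶ S) {X Y : C}
    (α : pow S X ⟶ pow S Y) : Prop :=
  (∀ Z : Cᵒᵖ, α.app Z (elTop top) = elTop top) ∧
  (∀ Z : Cᵒᵖ, α.app Z (elBot bot) = elBot bot) ∧
  (∀ (Z : Cᵒᵖ) (u v : (pow S X).obj Z), α.app Z (elMeet meet u v) = elMeet meet (α.app Z u) (α.app Z v)) ∧
  (∀ (Z : Cᵒᵖ) (u v : (pow S X).obj Z), α.app Z (elJoin join u v) = elJoin join (α.app Z u) (α.app Z v))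

/-- A join semilattice homomorphism `S^X ⟶ S^Y` (preserves `0` and binary joins). -/
def IsJoinHom (bot : ⊤_ C ⟶ S) (join : S ⨯ S ⟶ S) {X Y : C} (α : pow S X ⟶ pow S Y) : Prop :=
  (∀ Z : Cᵒᵖ, α.app Z (elBot bot) = elBot bot) ∧
  (∀ (Z : Cᵒᵖ) (u v : (pow S X).obj Z), α.app Z (elJoin join u v) = elJoin join (α.app Z u) (α.app Z v))

/-- A meet semilattice homomorphism `S^X ⟶ S^Y` (preserves `1` and binary meets). -/
def IsMeetHom (top : ⊤_ C ⟶ S) (meet : S ⨯ S ⟶ S) {X Y : C} (α : pow S X ⟶ pow S Y) : Prop :=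
  (∀ Z : Cᵒᵖ, α.app Z (elTop top) = elTop top) ∧
  (∀ (Z : Cᵒᵖ) (u v : (pow S X).obj Z), α.app Z (elMeet meet u v) = elMeet meet (α.app Z u) (α.app Z v))

/-- Pointwise meet of two natural transformations into `S^X`. -/
noncomputable def meetNat (meet : S ⨯ S ⟶ S) {F : Cᵒᵖ ⥤ Type v} {X : C}
    (α β : F ⟶ pow S X) : F ⟶ pow S X where
  app Z := TypeCat.ofHom (fun u => elMeet meet (α.app Z u) (β.app Z u))
  naturality Z W g := by
    ext u
    have hα := types_congr_hom (α.naturality g) u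
    have hβ := types_congr_hom (β.naturality g) u
    simp only [types_comp_apply] at hα hβ
    show elMeet meet (α.app W (F.map g u)) (β.app W (F.map g u))
      = prod.map g.unop (𝟙 X) ≫ elMeet meet (α.app Z u) (β.app Z u)
    rw [hα, hβ]
    show elMeet meet (prod.map g.unop (𝟙 X) ≫ α.app Z u) (prod.map g.unop (𝟙 X) ≫ β.app Z u) = _
    unfold elMeet
    exact (prod.comp_lift_assoc ..).symm

/-- Pointwise join of two natural transformations into `S^X`. -/
noncomputable def joinNat (join : S ⨯ S ⟶ S) {F : Cᵒᵖ ⥤ Type v} {X : C}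
    (α β : F ⟶ pow S X) : F ⟶ pow S X where
  app Z := TypeCat.ofHom (fun u => elJoin join (α.app Z u) (β.app Z u))
  naturality Z W g := by
    ext u
    have hα := types_congr_hom (α.naturality g) u
    have hβ := types_congr_hom (β.naturality g) u
    simp only [types_comp_apply] at hα hβ
    show elJoin join (α.app W (F.map g u)) (β.app W (F.map g u))
      = prod.map g.unop (𝟙 X) ≫ elJoin join (α.app Z u) (β.app Z u)
    rw [hα, hβ]
    show elJoin join (prod.map g.unop (𝟙 X) ≫ α.app Z u) (prod.map g.unop (𝟙 X) ≫ β.app Z u) = _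
    unfold elJoin
    exact (prod.comp_lift_assoc ..).symm

end LatticeOps

/-- The natural transformation `S^{(X+X)+Y} ⟶ S^X` given by
`(u,v,w) ↦ u ⊓ (v ⊔ S^f(w))`, used in the statement of Axiom 7. -/
noncomputable def phiNat {S : C} (meet join : S ⨯ S ⟶ S) [HasBinaryCoproducts C]
    {X Y : C} (f : X ⟶ Y) : pow S ((X ⨿ X) ⨿ Y) ⟶ pow S X :=
  meetNat meet (powMap S ((coprod.inl : X ⟶ X ⨿ X) ≫ coprod.inl))
    (joinNat join (powMap S ((coprod.inr : X ⟶ X ⨿ X) ≫ coprod.inl))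
      (powMap S (coprod.inr : Y ⟶ (X ⨿ X) ⨿ Y) ≫ powMap S f))

noncomputable instance powPartialOrder [∀ A B : C, PartialOrder (A ⟶ B)] (S X : C) (Z : Cᵒᵖ) :
    PartialOrder ((pow S X).obj Z) :=
  inferInstanceAs (PartialOrder (Opposite.unop Z ⨯ X ⟶ S))

/-- A *category of spaces*: an order-enriched category with (order-enriched) finite limits
and finite coproducts (Axiom 1), pullback-stable coproducts (Axiom 2), a Sierpiński object
`S` (Axiom 3) which is double exponentiable (Axiom 4), such that distributive lattice
homomorphisms between double exponentials are represented by morphisms (Axiom 5),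
(de/in)flationary idempotents split in the (upper/lower) power Kleisli categories (Axiom 6),
and `S^(-)` sends equalizers to coequalizers of the appropriate pairs (Axiom 7). -/
class CategoryOfSpaces (C : Type v) [Category.{v} C] [∀ X Y : C, PartialOrder (X ⟶ Y)]
    [HasFiniteLimits C] [HasFiniteCoproducts C] : Type v where
  /-- composition is monotone (order enrichment) -/
  comp_le : ∀ {X Y Z : C} {f f' : X ⟶ Y} {g g' : Y ⟶ Z}, f ≤ f' → g ≤ g' → f ≫ g ≤ f' ≫ g'
  /-- the universal property of products is order-enriched -/
  lift_le : ∀ {X Y Z : C} {f f' : X ⟶ Y} {g g' : X ⟶ Z}, f ≤ f' → g ≤ g' →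
    prod.lift f g ≤ prod.lift f' g'
  /-- Axiom 2: pullback preserves finite coproducts -/
  pullback_preserves_coproducts : ∀ {X Y : C} (f : X ⟶ Y),
    Nonempty (PreservesFiniteCoproducts (Over.pullback f))
  /-- Axiom 3: the Sierpiński object -/
  S : C
  top : ⊤_ C ⟶ S
  bot : ⊤_ C ⟶ S
  meet : S ⨯ S ⟶ S
  join : S ⨯ S ⟶ S
  /-- `1 : 1 ⟶ S` is right adjoint to `! : S ⟶ 1` -/
  top_adj : 𝟙 S ≤ terminal.from S ≫ top
  /-- `0 : 1 ⟶ S` is left adjoint to `! : S ⟶ 1` -/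
  bot_adj : terminal.from S ≫ bot ≤ 𝟙 S
  /-- `⊓` is right adjoint to the diagonal -/
  meet_unit : 𝟙 S ≤ prod.lift (𝟙 S) (𝟙 S) ≫ meet
  meet_counit : meet ≫ prod.lift (𝟙 S) (𝟙 S) ≤ 𝟙 (S ⨯ S)
  /-- `⊔` is left adjoint to the diagonal -/
  join_unit : 𝟙 (S ⨯ S) ≤ join ≫ prod.lift (𝟙 S) (𝟙 S)
  join_counit : prod.lift (𝟙 S) (𝟙 S) ≫ join ≤ 𝟙 S
  /-- `S` is a distributive lattice -/
  distrib : prod.map (𝟙 S) join ≫ meet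
    = prod.lift (prod.map (𝟙 S) prod.fst ≫ meet) (prod.map (𝟙 S) prod.snd ≫ meet) ≫ join
  /-- a morphism into `S` is determined by the pullback of `1` -/
  sierp_top : ∀ {X : C} (a b : X ⟶ S),
    (∀ {T : C} (x : T ⟶ X), x ≫ a = terminal.from T ≫ top ↔ x ≫ b = terminal.from T ≫ top) →
    a = b
  /-- a morphism into `S` is determined by the pullback of `0` -/
  sierp_bot : ∀ {X : C} (a b : X ⟶ S),
    (∀ {T : C} (x : T ⟶ X), x ≫ a = terminal.from T ≫ bot ↔ x ≫ b = terminal.from T ≫ bot) →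
    a = b
  /-- Axiom 4: `S` is double exponentiable -/
  double_exp : ∀ X : C, ∃ P : C, Nonempty (doublePresheaf S X ≅ yoneda.obj P)
  /-- Axiom 5 -/
  ax5 : ∀ {X Y : C} (α : pow S X ⟶ pow S Y), IsDLHom top bot meet join α →
    ∃! f : Y ⟶ X, α = powMap S f
  /-- Axiom 6 (i): inflationary idempotents split in the lower power Kleisli category -/
  ax6L : ∀ {X : C} (α : pow S X ⟶ pow S X), IsJoinHom bot join α →
    (∀ (Z : Cᵒᵖ) (u : Opposite.unop Z ⨯ X ⟶ S), u ≤ (α.app Z u : Opposite.unop Z ⨯ X ⟶ S)) →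
    α ≫ α = α →
    ∃ (X₀ : C) (θ : pow S X₀ ⟶ pow S X) (γ : pow S X ⟶ pow S X₀),
      IsJoinHom bot join θ ∧ IsJoinHom bot join γ ∧ γ ≫ θ = α ∧ θ ≫ γ = 𝟙 (pow S X₀)
  /-- Axiom 6 (ii): deflationary idempotents split in the upper power Kleisli category -/
  ax6U : ∀ {X : C} (α : pow S X ⟶ pow S X), IsMeetHom top meet α →
    (∀ (Z : Cᵒᵖ) (u : Opposite.unop Z ⨯ X ⟶ S), (α.app Z u : Opposite.unop Z ⨯ X ⟶ S) ≤ u) →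
    α ≫ α = α →
    ∃ (X₀ : C) (θ : pow S X₀ ⟶ pow S X) (γ : pow S X ⟶ pow S X₀),
      IsMeetHom top meet θ ∧ IsMeetHom top meet γ ∧ γ ≫ θ = α ∧ θ ≫ γ = 𝟙 (pow S X₀)
  /-- Axiom 7 -/
  ax7 : ∀ {E X Y : C} (e : E ⟶ X) (f g : X ⟶ Y) (w : e ≫ f = e ≫ g),
    Nonempty (IsLimit (Fork.ofι e w)) →
    phiNat meet join f ≫ powMap S e = phiNat meet join g ≫ powMap S e ∧
    ∀ {W : C} (κ : pow S X ⟶ pow S W), phiNat meet join f ≫ κ = phiNat meet join g ≫ κ →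
      ∃! κ' : pow S E ⟶ pow S W, κ = powMap S e ≫ κ'

variable {C : Type v} [Category.{v} C] [∀ X Y : C, PartialOrder (X ⟶ Y)]
  [HasFiniteLimits C] [HasFiniteCoproducts C] [SC : CategoryOfSpaces C]

/-- The Sierpiński object of a category of spaces. -/
noncomputable def Sierp (C : Type v) [Category.{v} C] [∀ X Y : C, PartialOrder (X ⟶ Y)]
    [HasFiniteLimits C] [HasFiniteCoproducts C] [SC : CategoryOfSpaces C] : C := SC.S

/-- `E` witnesses that `f` is an open map: `E ⊣ S^f` and the Frobenius condition holds. -/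
def IsOpenVia {X Y : C} (f : X ⟶ Y) (E : pow (Sierp C) X ⟶ pow (Sierp C) Y) : Prop :=
  (∀ (Z : Cᵒᵖ) (u : Opposite.unop Z ⨯ X ⟶ Sierp C) (v : Opposite.unop Z ⨯ Y ⟶ Sierp C),
      (E.app Z u : Opposite.unop Z ⨯ Y ⟶ Sierp C) ≤ v ↔
        u ≤ ((powMap (Sierp C) f).app Z v : Opposite.unop Z ⨯ X ⟶ Sierp C)) ∧
  (∀ (Z : Cᵒᵖ) (u : Opposite.unop Z ⨯ X ⟶ Sierp C) (v : Opposite.unop Z ⨯ Y ⟶ Sierp C),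
      E.app Z (elMeet SC.meet u ((powMap (Sierp C) f).app Z v))
        = elMeet SC.meet (E.app Z u) v)

/-- A morphism is open if some `∃_f` witnesses it. -/
def IsOpenMor {X Y : C} (f : X ⟶ Y) : Prop := ∃ E, IsOpenVia f E

/-- An object is open if the unique map to the terminal object is open. -/
def IsOpenOb (X : C) : Prop := IsOpenMor (terminal.from X)

/-- `p#` is a triquotient assignment on `p`. -/
def IsTriqAssign {Z Y : C} (p : Z ⟶ Y) (ph : pow (Sierp C) Z ⟶ pow (Sierp C) Y) : Prop :=
  (∀ (W : Cᵒᵖ) (u : Opposite.unop W ⨯ Z ⟶ Sierp C) (v : Opposite.unop W ⨯ Y ⟶ Sierp C),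
      elMeet SC.meet (ph.app W u) v
        ≤ (ph.app W (elMeet SC.meet u ((powMap (Sierp C) p).app W v))
            : Opposite.unop W ⨯ Y ⟶ Sierp C)) ∧
  (∀ (W : Cᵒᵖ) (u : Opposite.unop W ⨯ Z ⟶ Sierp C) (v : Opposite.unop W ⨯ Y ⟶ Sierp C),
      (ph.app W (elJoin SC.join u ((powMap (Sierp C) p).app W v))
          : Opposite.unop W ⨯ Y ⟶ Sierp C) ≤ elJoin SC.join (ph.app W u) v)

/-- `p` is a triquotient surjection. -/
def IsTriqSurj {Z Y : C} (p : Z ⟶ Y) : Prop :=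
  ∃ ph, IsTriqAssign p ph ∧ powMap (Sierp C) p ≫ ph = 𝟙 (pow (Sierp C) Y)

/-! ### Auxiliary development for the regular-epi theorem -/

set_option linter.unusedSectionVars false

section RegularEpiAux

/-- A cancellation-style master identity in distributive lattices. -/
lemma master_abstract {α β : Type u} [DistribLattice α] [DistribLattice β]
    (T : α → β) (pstar : β → α)
    (mono : ∀ x y : α, x ≤ y → T x ≤ T y)
    (hm : ∀ (x : α) (w : β), T (x ⊓ pstar w) = T x ⊓ w)
    (hj : ∀ (x : α) (w : β), T (x ⊔ pstar w) = T x ⊔ w)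
    (u v : α) (w : β) :
    T (u ⊓ (v ⊔ pstar w)) = T (u ⊓ v) ⊔ (T u ⊓ w) := by
  have key1 : (u ⊓ (v ⊔ pstar w)) ⊓ pstar w = u ⊓ pstar w := by
    rw [inf_assoc]
    congr 1
    exact inf_eq_right.mpr le_sup_right
  have key2 : (u ⊓ (v ⊔ pstar w)) ⊔ pstar w = (u ⊓ v) ⊔ pstar w := by
    rw [sup_inf_right, sup_assoc, sup_idem, ← sup_inf_right]
  have hA1 : T (u ⊓ (v ⊔ pstar w)) ⊓ w = T u ⊓ w := by
    rw [← hm, key1, hm]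
  have hA2 : T (u ⊓ (v ⊔ pstar w)) ⊔ w = T (u ⊓ v) ⊔ w := by
    rw [← hj, key2, hj]
  have hmono : T (u ⊓ v) ≤ T u := mono _ _ inf_le_left
  have h3 : (T (u ⊓ v) ⊔ (T u ⊓ w)) ⊓ w = T u ⊓ w := by
    rw [inf_sup_right, inf_assoc, inf_idem]
    exact sup_eq_right.mpr (inf_le_inf_right w hmono)
  have h4 : (T (u ⊓ v) ⊔ (T u ⊓ w)) ⊔ w = T (u ⊓ v) ⊔ w := by
    rw [sup_assoc]
    congr 1
    exact sup_eq_right.mpr inf_le_right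
  exact eq_of_inf_eq_sup_eq (hA1.trans h3.symm) (hA2.trans h4.symm)

section CompLemmas

variable {A B : C}

lemma comp_elTop (x : B ⟶ A) :
    x ≫ elTop (S := SC.S) SC.top = elTop SC.top := by
  rw [elTop, elTop, ← Category.assoc, terminal.comp_from]

lemma comp_elBot (x : B ⟶ A) :
    x ≫ elBot (S := SC.S) SC.bot = elBot SC.bot := by
  rw [elBot, elBot, ← Category.assoc, terminal.comp_from]

lemma comp_elMeet (x : B ⟶ A) (u v : A ⟶ SC.S) :
    x ≫ elMeet SC.meet u v = elMeet SC.meet (x ≫ u) (x ≫ v) := by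
  rw [elMeet, elMeet, prod.comp_lift_assoc]

lemma comp_elJoin (x : B ⟶ A) (u v : A ⟶ SC.S) :
    x ≫ elJoin SC.join u v = elJoin SC.join (x ≫ u) (x ≫ v) := by
  rw [elJoin, elJoin, prod.comp_lift_assoc]

/-- `elBot` is the least element. -/
lemma elBot_le (x : A ⟶ SC.S) : elBot (S := SC.S) SC.bot ≤ x := by
  have h := SC.comp_le (le_refl x) SC.bot_adj
  rw [← Category.assoc, terminal.comp_from, Category.comp_id] at h
  exact h

/-- `elTop` is the greatest element. -/
lemma le_elTop (x : A ⟶ SC.S) : x ≤ elTop (S := SC.S) SC.top := by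
  have h := SC.comp_le (le_refl x) SC.top_adj
  rw [← Category.assoc, terminal.comp_from, Category.comp_id] at h
  exact h

lemma elMeet_le_left (u v : A ⟶ SC.S) : elMeet SC.meet u v ≤ u := by
  have h1 : SC.meet ≤ (prod.fst : SC.S ⨯ SC.S ⟶ SC.S) := by
    have h := SC.comp_le SC.meet_counit (le_refl (prod.fst : SC.S ⨯ SC.S ⟶ SC.S))
    rw [Category.assoc, prod.lift_fst, Category.comp_id, Category.id_comp] at h
    exact h
  have h2 := SC.comp_le (le_refl (prod.lift u v)) h1
  rw [prod.lift_fst] at h2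
  exact h2

lemma elMeet_le_right (u v : A ⟶ SC.S) : elMeet SC.meet u v ≤ v := by
  have h1 : SC.meet ≤ (prod.snd : SC.S ⨯ SC.S ⟶ SC.S) := by
    have h := SC.comp_le SC.meet_counit (le_refl (prod.snd : SC.S ⨯ SC.S ⟶ SC.S))
    rw [Category.assoc, prod.lift_snd, Category.comp_id, Category.id_comp] at h
    exact h
  have h2 := SC.comp_le (le_refl (prod.lift u v)) h1
  rw [prod.lift_snd] at h2
  exact h2

lemma le_elMeet {u v w : A ⟶ SC.S} (h1 : w ≤ u) (h2 : w ≤ v) :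
    w ≤ elMeet SC.meet u v := by
  have h := SC.comp_le (le_refl w) SC.meet_unit
  rw [Category.comp_id, prod.comp_lift_assoc, Category.comp_id] at h
  exact le_trans h (SC.comp_le (SC.lift_le h1 h2) (le_refl SC.meet))

lemma le_elJoin_left (u v : A ⟶ SC.S) : u ≤ elJoin SC.join u v := by
  have h1 : (prod.fst : SC.S ⨯ SC.S ⟶ SC.S) ≤ SC.join := by
    have h := SC.comp_le SC.join_unit (le_refl (prod.fst : SC.S ⨯ SC.S ⟶ SC.S))
    rw [Category.assoc, prod.lift_fst, Category.comp_id, Category.id_comp] at h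
    exact h
  have h2 := SC.comp_le (le_refl (prod.lift u v)) h1
  rw [prod.lift_fst] at h2
  exact h2

lemma le_elJoin_right (u v : A ⟶ SC.S) : v ≤ elJoin SC.join u v := by
  have h1 : (prod.snd : SC.S ⨯ SC.S ⟶ SC.S) ≤ SC.join := by
    have h := SC.comp_le SC.join_unit (le_refl (prod.snd : SC.S ⨯ SC.S ⟶ SC.S))
    rw [Category.assoc, prod.lift_snd, Category.comp_id, Category.id_comp] at h
    exact h
  have h2 := SC.comp_le (le_refl (prod.lift u v)) h1
  rw [prod.lift_snd] at h2
  exact h2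

lemma elJoin_le {u v w : A ⟶ SC.S} (h1 : u ≤ w) (h2 : v ≤ w) :
    elJoin SC.join u v ≤ w := by
  have h := SC.comp_le (le_refl w) SC.join_counit
  rw [Category.comp_id, prod.comp_lift_assoc, Category.comp_id] at h
  exact le_trans (SC.comp_le (SC.lift_le h1 h2) (le_refl SC.join)) h

lemma meet_join_distrib (a b c : A ⟶ SC.S) :
    elMeet SC.meet a (elJoin SC.join b c)
      = elJoin SC.join (elMeet SC.meet a b) (elMeet SC.meet a c) := by
  have h := congrArg (fun k => prod.lift a (prod.lift b c) ≫ k) SC.distrib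
  simp only [prod.lift_map_assoc, prod.comp_lift_assoc, prod.lift_map,
    Category.comp_id, prod.lift_fst, prod.lift_snd] at h
  rw [elMeet, elJoin, elJoin, elMeet, elMeet]
  exact h

lemma elMeet_bot_left (u : A ⟶ SC.S) :
    elMeet SC.meet (elBot (S := SC.S) SC.bot) u = elBot SC.bot :=
  le_antisymm (elMeet_le_left _ _) (elBot_le _)

lemma elJoin_bot_right (u : A ⟶ SC.S) :
    elJoin SC.join u (elBot (S := SC.S) SC.bot) = u :=
  le_antisymm (elJoin_le (le_refl u) (elBot_le u)) (le_elJoin_left _ _)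

lemma elMeet_top_left (u : A ⟶ SC.S) :
    elMeet SC.meet (elTop (S := SC.S) SC.top) u = u :=
  le_antisymm (elMeet_le_right _ _) (le_elMeet (le_elTop u) (le_refl u))

lemma elJoin_eq_right {u v : A ⟶ SC.S} (h : u ≤ v) :
    elJoin SC.join u v = v :=
  le_antisymm (elJoin_le h (le_refl v)) (le_elJoin_right _ _)

end CompLemmas

/-- The hom-sets into the Sierpiński object are distributive lattices. -/
noncomputable def homDL (A : C) : DistribLattice (A ⟶ SC.S) :=
  letI L : Lattice (A ⟶ SC.S) :=
    { (inferInstance : PartialOrder (A ⟶ SC.S)) with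
      sup := elJoin SC.join
      inf := elMeet SC.meet
      le_sup_left := le_elJoin_left
      le_sup_right := le_elJoin_right
      sup_le := fun _ _ _ h1 h2 => elJoin_le h1 h2
      inf_le_left := elMeet_le_left
      inf_le_right := elMeet_le_right
      le_inf := fun _ _ _ h1 h2 => le_elMeet h1 h2 }
  DistribLattice.ofInfSupLe fun a b c => le_of_eq (meet_join_distrib a b c)

/-- Every natural transformation between powers of the Sierpiński object is monotone. -/
lemma nat_mono {X Y : C} (α : pow (Sierp C) X ⟶ pow (Sierp C) Y) (V : Cᵒᵖ)
    (u u' : Opposite.unop V ⨯ X ⟶ SC.S) (h : u ≤ u') :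
    (α.app V u : Opposite.unop V ⨯ Y ⟶ SC.S) ≤ α.app V u' := by
  set bσ : Opposite.unop V ⟶ Opposite.unop V ⨯ SC.S :=
    prod.lift (𝟙 _) (elBot SC.bot) with hbσ
  set tσ : Opposite.unop V ⟶ Opposite.unop V ⨯ SC.S :=
    prod.lift (𝟙 _) (elTop SC.top) with htσ
  set M : (Opposite.unop V ⨯ SC.S) ⨯ X ⟶ SC.S :=
    elJoin SC.join (prod.map prod.fst (𝟙 X) ≫ u)
      (elMeet SC.meet (prod.fst ≫ prod.snd) (prod.map prod.fst (𝟙 X) ≫ u')) with hM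
  have epull : ∀ (k : Opposite.unop V ⟶ Opposite.unop V ⨯ SC.S) (x : Opposite.unop V ⨯ X ⟶ SC.S),
      prod.map k (𝟙 X) ≫ prod.map prod.fst (𝟙 X) ≫ x = prod.map (k ≫ prod.fst) (𝟙 X) ≫ x := by
    intro k x
    rw [← Category.assoc, prod.map_map, Category.comp_id]
  have esnd : ∀ (k : Opposite.unop V ⟶ Opposite.unop V ⨯ SC.S),
      prod.map k (𝟙 X) ≫ (prod.fst ≫ prod.snd) = prod.fst ≫ (k ≫ prod.snd) := by
    intro k
    rw [← Category.assoc, prod.map_fst, Category.assoc]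
  have hb : prod.map bσ (𝟙 X) ≫ M = u := by
    rw [hM, comp_elJoin, comp_elMeet, epull, epull, esnd, hbσ, prod.lift_fst,
      prod.lift_snd, comp_elBot, prod.map_id_id, Category.id_comp, Category.id_comp,
      elMeet_bot_left, elJoin_bot_right]
  have ht : prod.map tσ (𝟙 X) ≫ M = u' := by
    rw [hM, comp_elJoin, comp_elMeet, epull, epull, esnd, htσ, prod.lift_fst,
      prod.lift_snd, comp_elTop, prod.map_id_id, Category.id_comp, Category.id_comp,
      elMeet_top_left, elJoin_eq_right h]
  have h1 : α.app V u = prod.map bσ (𝟙 Y) ≫ α.app (Opposite.op (Opposite.unop V ⨯ SC.S)) M := by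
    rw [← hb]
    exact types_congr_hom (α.naturality bσ.op) M
  have h2 : α.app V u' = prod.map tσ (𝟙 Y) ≫ α.app (Opposite.op (Opposite.unop V ⨯ SC.S)) M := by
    rw [← ht]
    exact types_congr_hom (α.naturality tσ.op) M
  rw [h1, h2]
  have hbt : bσ ≤ tσ := SC.lift_le (le_refl (𝟙 _)) (elBot_le (elTop SC.top))
  have hmap : ∀ (k : Opposite.unop V ⟶ Opposite.unop V ⨯ SC.S),
      prod.map k (𝟙 Y) = prod.lift (prod.fst ≫ k) prod.snd := by
    intro k
    apply Limits.prod.hom_ext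
    · rw [prod.map_fst, prod.lift_fst]
    · rw [prod.map_snd, prod.lift_snd, Category.comp_id]
  rw [hmap bσ, hmap tσ]
  exact SC.comp_le (SC.lift_le (SC.comp_le (le_refl _) hbt) (le_refl _)) (le_refl _)

section TriqLemmas

variable {Z Y : C} (p : Z ⟶ Y) (ph : pow (Sierp C) Z ⟶ pow (Sierp C) Y)

lemma sec_app (hsec : powMap (Sierp C) p ≫ ph = 𝟙 (pow (Sierp C) Y)) (V : Cᵒᵖ)
    (v : Opposite.unop V ⨯ Y ⟶ SC.S) :
    ph.app V (prod.map (𝟙 _) p ≫ v) = v :=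
  types_congr_hom (NatTrans.congr_app hsec V) v

lemma triq_meet_eq (hta : IsTriqAssign p ph)
    (hsec : powMap (Sierp C) p ≫ ph = 𝟙 (pow (Sierp C) Y)) (V : Cᵒᵖ)
    (u : Opposite.unop V ⨯ Z ⟶ SC.S) (v : Opposite.unop V ⨯ Y ⟶ SC.S) :
    ph.app V (elMeet SC.meet u (prod.map (𝟙 _) p ≫ v))
      = elMeet SC.meet (ph.app V u) v := by
  refine le_antisymm ?_ (hta.1 V u v)
  refine le_elMeet ?_ ?_
  · exact nat_mono ph V _ _ (elMeet_le_left _ _)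
  · have h := nat_mono ph V _ _ (elMeet_le_right u (prod.map (𝟙 _) p ≫ v))
    erw [sec_app p ph hsec] at h; exact h

lemma triq_join_eq (hta : IsTriqAssign p ph)
    (hsec : powMap (Sierp C) p ≫ ph = 𝟙 (pow (Sierp C) Y)) (V : Cᵒᵖ)
    (u : Opposite.unop V ⨯ Z ⟶ SC.S) (v : Opposite.unop V ⨯ Y ⟶ SC.S) :
    ph.app V (elJoin SC.join u (prod.map (𝟙 _) p ≫ v))
      = elJoin SC.join (ph.app V u) v := by
  refine le_antisymm (hta.2 V u v) ?_
  refine elJoin_le ?_ ?_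
  · exact nat_mono ph V _ _ (le_elJoin_left _ _)
  · have h := nat_mono ph V _ _ (le_elJoin_right u (prod.map (𝟙 _) p ≫ v))
    erw [sec_app p ph hsec] at h; exact h

/-- The master equality for triquotient assignments. -/
lemma triq_master (hta : IsTriqAssign p ph)
    (hsec : powMap (Sierp C) p ≫ ph = 𝟙 (pow (Sierp C) Y)) (V : Cᵒᵖ)
    (u v : Opposite.unop V ⨯ Z ⟶ SC.S) (w : Opposite.unop V ⨯ Y ⟶ SC.S) :
    ph.app V (elMeet SC.meet u (elJoin SC.join v (prod.map (𝟙 _) p ≫ w)))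
      = elJoin SC.join (ph.app V (elMeet SC.meet u v))
          (elMeet SC.meet (ph.app V u) w) := by
  letI dZ : DistribLattice (Opposite.unop V ⨯ Z ⟶ SC.S) := homDL _
  letI dY : DistribLattice (Opposite.unop V ⨯ Y ⟶ SC.S) := homDL _
  letI : DistribLattice ((pow (Sierp C) Z).obj V) := dZ
  letI : DistribLattice ((pow (Sierp C) Y).obj V) := dY
  exact master_abstract
    (fun x : Opposite.unop V ⨯ Z ⟶ SC.S => (ph.app V x : Opposite.unop V ⨯ Y ⟶ SC.S))
    (fun w : Opposite.unop V ⨯ Y ⟶ SC.S => prod.map (𝟙 _) p ≫ w)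
    (fun x y hxy => nat_mono ph V x y hxy)
    (fun x w => triq_meet_eq p ph hta hsec V x w)
    (fun x w => triq_join_eq p ph hta hsec V x w)
    u v w

end TriqLemmas

section Kappa

variable {Z Y : C} (p : Z ⟶ Y)

/-- The associativity comparison `(A ⨯ X) ⨯ X ⟶ A ⨯ (X ⨯ X)`. -/
noncomputable def ascHom (A X : C) : (A ⨯ X) ⨯ X ⟶ A ⨯ (X ⨯ X) :=
  prod.lift (prod.fst ≫ prod.fst) (prod.lift (prod.fst ≫ prod.snd) prod.snd)

/-- The graph-restriction `A ⨯ Z ⟶ (A ⨯ Z) ⨯ Y` of `p`. -/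
noncomputable def grHom (A : C) : A ⨯ Z ⟶ (A ⨯ Z) ⨯ Y :=
  prod.lift (𝟙 _) (prod.snd ≫ p)

variable (ph : pow (Sierp C) Z ⟶ pow (Sierp C) Y)

/-- `S^{Z⨯Z} ⟶ S^Z`: apply `ph` in the second coordinate, then restrict along the
graph of `p`. -/
noncomputable def kappa : pow (Sierp C) (Z ⨯ Z) ⟶ pow (Sierp C) Z where
  app V := TypeCat.ofHom (fun m => grHom p (Opposite.unop V) ≫
    ph.app (Opposite.op (Opposite.unop V ⨯ Z)) (ascHom (Opposite.unop V) Z ≫ m))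
  naturality V V' h := by
    ext m
    change (Opposite.unop V ⨯ (Z ⨯ Z) ⟶ Sierp C) at m
    show grHom p (Opposite.unop V') ≫
        ph.app (Opposite.op (Opposite.unop V' ⨯ Z))
          (ascHom (Opposite.unop V') Z ≫ prod.map h.unop (𝟙 (Z ⨯ Z)) ≫ m)
      = prod.map h.unop (𝟙 Z) ≫ grHom p (Opposite.unop V) ≫
          ph.app (Opposite.op (Opposite.unop V ⨯ Z)) (ascHom (Opposite.unop V) Z ≫ m)
    have step1 : ascHom (Opposite.unop V') Z ≫ prod.map h.unop (𝟙 (Z ⨯ Z))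
        = prod.map (prod.map h.unop (𝟙 Z)) (𝟙 Z) ≫ ascHom (Opposite.unop V) Z := by
      apply Limits.prod.hom_ext
      · simp [ascHom, prod.lift_fst, prod.lift_snd, prod.map_fst, prod.map_snd,
          prod.lift_fst_assoc, prod.lift_snd_assoc, prod.map_fst_assoc, prod.map_snd_assoc]
      · apply Limits.prod.hom_ext <;>
          simp [ascHom, prod.lift_fst, prod.lift_snd, prod.map_fst, prod.map_snd,
            prod.lift_fst_assoc, prod.lift_snd_assoc, prod.map_fst_assoc, prod.map_snd_assoc]
    have inner : ascHom (Opposite.unop V') Z ≫ prod.map h.unop (𝟙 (Z ⨯ Z)) ≫ m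
        = prod.map (prod.map h.unop (𝟙 Z)) (𝟙 Z) ≫ ascHom (Opposite.unop V) Z ≫ m := by
      rw [← Category.assoc, step1, Category.assoc]
    rw [inner]
    have step2 : ph.app (Opposite.op (Opposite.unop V' ⨯ Z))
        (prod.map (prod.map h.unop (𝟙 Z)) (𝟙 Z) ≫ ascHom (Opposite.unop V) Z ≫ m)
        = prod.map (prod.map h.unop (𝟙 Z)) (𝟙 Y) ≫
            ph.app (Opposite.op (Opposite.unop V ⨯ Z)) (ascHom (Opposite.unop V) Z ≫ m) :=
      types_congr_hom (ph.naturality (prod.map h.unop (𝟙 Z)).op) (ascHom (Opposite.unop V) Z ≫ m)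
    rw [step2]
    have step3 : grHom p (Opposite.unop V') ≫ prod.map (prod.map h.unop (𝟙 Z)) (𝟙 Y)
        = prod.map h.unop (𝟙 Z) ≫ grHom p (Opposite.unop V) := by
      apply Limits.prod.hom_ext <;>
        simp [grHom, prod.lift_fst, prod.lift_snd, prod.map_fst, prod.map_snd,
          prod.lift_fst_assoc, prod.lift_snd_assoc, prod.map_fst_assoc, prod.map_snd_assoc]
    erw [← Category.assoc, step3, Category.assoc]

/-- The key claim: `kappa` identifies the two `phiNat`-images. -/
lemma kappa_claim (hta : IsTriqAssign p ph)
    (hsec : powMap (Sierp C) p ≫ ph = 𝟙 (pow (Sierp C) Y)) (V : Cᵒᵖ)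
    (u v : Opposite.unop V ⨯ (Z ⨯ Z) ⟶ SC.S) (w : Opposite.unop V ⨯ Y ⟶ SC.S) :
    (kappa p ph).app V (elMeet SC.meet u (elJoin SC.join v
        (prod.map (𝟙 _) (prod.fst ≫ p) ≫ w)))
      = (kappa p ph).app V (elMeet SC.meet u (elJoin SC.join v
          (prod.map (𝟙 _) (prod.snd ≫ p) ≫ w))) := by
  have m1 : ascHom (Opposite.unop V) Z ≫ prod.map (𝟙 _) (prod.fst ≫ p)
      = prod.map (𝟙 _) p ≫ (prod.fst ≫ prod.map (𝟙 _) p) := by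
    apply Limits.prod.hom_ext <;>
      simp [ascHom, prod.lift_fst, prod.lift_snd, prod.map_fst, prod.map_snd,
        prod.lift_fst_assoc, prod.lift_snd_assoc, prod.map_fst_assoc, prod.map_snd_assoc]
  have m2 : ascHom (Opposite.unop V) Z ≫ prod.map (𝟙 _) (prod.snd ≫ p)
      = prod.map (𝟙 _) p ≫ prod.map prod.fst (𝟙 Y) := by
    apply Limits.prod.hom_ext <;>
      simp [ascHom, prod.lift_fst, prod.lift_snd, prod.map_fst, prod.map_snd,
        prod.lift_fst_assoc, prod.lift_snd_assoc, prod.map_fst_assoc, prod.map_snd_assoc]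
  have g1 : grHom p (Opposite.unop V) ≫ (prod.fst ≫ prod.map (𝟙 _) p) ≫ w
      = prod.map (𝟙 _) p ≫ w := by
    rw [← Category.assoc, ← Category.assoc, grHom, prod.lift_fst, Category.id_comp]
  have g2 : grHom p (Opposite.unop V) ≫ prod.map prod.fst (𝟙 Y) ≫ w
      = prod.map (𝟙 _) p ≫ w := by
    have e : grHom p (Opposite.unop V) ≫ prod.map prod.fst (𝟙 Y)
        = prod.map (𝟙 (Opposite.unop V)) p := by
      apply Limits.prod.hom_ext <;>
        simp [grHom, prod.lift_fst, prod.lift_snd, prod.map_fst, prod.map_snd,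
          prod.lift_fst_assoc, prod.lift_snd_assoc, prod.map_fst_assoc, prod.map_snd_assoc]
    rw [← Category.assoc, e]
  show grHom p (Opposite.unop V) ≫
      ph.app (Opposite.op (Opposite.unop V ⨯ Z))
        (ascHom (Opposite.unop V) Z ≫ elMeet SC.meet u (elJoin SC.join v
          (prod.map (𝟙 _) (prod.fst ≫ p) ≫ w)))
    = grHom p (Opposite.unop V) ≫
      ph.app (Opposite.op (Opposite.unop V ⨯ Z))
        (ascHom (Opposite.unop V) Z ≫ elMeet SC.meet u (elJoin SC.join v
          (prod.map (𝟙 _) (prod.snd ≫ p) ≫ w)))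
  erw [comp_elMeet, comp_elMeet, comp_elJoin, comp_elJoin]
  have i1 : ascHom (Opposite.unop V) Z ≫ prod.map (𝟙 _) (prod.fst ≫ p) ≫ w
      = prod.map (𝟙 _) p ≫ ((prod.fst ≫ prod.map (𝟙 _) p) ≫ w) := by
    rw [← Category.assoc, m1, Category.assoc]
  have i2 : ascHom (Opposite.unop V) Z ≫ prod.map (𝟙 _) (prod.snd ≫ p) ≫ w
      = prod.map (𝟙 _) p ≫ (prod.map prod.fst (𝟙 Y) ≫ w) := by
    rw [← Category.assoc, m2, Category.assoc]
  rw [i1, i2]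
  rw [triq_master p ph hta hsec, triq_master p ph hta hsec]
  erw [comp_elJoin, comp_elJoin, comp_elMeet, comp_elMeet]
  rw [g1, g2]

lemma kappa_coeq (hta : IsTriqAssign p ph)
    (hsec : powMap (Sierp C) p ≫ ph = 𝟙 (pow (Sierp C) Y)) :
    phiNat SC.meet SC.join (prod.fst ≫ p) ≫ kappa p ph
      = phiNat SC.meet SC.join (prod.snd ≫ p) ≫ kappa p ph := by
  apply NatTrans.ext
  funext V; ext t
  show (kappa p ph).app V (elMeet SC.meet (prod.map (𝟙 _) (coprod.inl ≫ coprod.inl) ≫ t)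
      (elJoin SC.join (prod.map (𝟙 _) (coprod.inr ≫ coprod.inl) ≫ t)
        (prod.map (𝟙 _) (prod.fst ≫ p) ≫ prod.map (𝟙 _) coprod.inr ≫ t)))
    = (kappa p ph).app V (elMeet SC.meet (prod.map (𝟙 _) (coprod.inl ≫ coprod.inl) ≫ t)
      (elJoin SC.join (prod.map (𝟙 _) (coprod.inr ≫ coprod.inl) ≫ t)
        (prod.map (𝟙 _) (prod.snd ≫ p) ≫ prod.map (𝟙 _) coprod.inr ≫ t)))
  exact kappa_claim p ph hta hsec V _ _ _

end Kappa

section FactB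

variable {Z Y : C} (p : Z ⟶ Y) (ph : pow (Sierp C) Z ⟶ pow (Sierp C) Y)

/-- `powMap` of any morphism is a distributive lattice homomorphism. -/
lemma powMap_isDLHom {X X' : C} (f : X ⟶ X') :
    IsDLHom SC.top SC.bot SC.meet SC.join (powMap (Sierp C) f) :=
  ⟨fun V => comp_elTop (prod.map (𝟙 (Opposite.unop V)) f),
   fun V => comp_elBot (prod.map (𝟙 (Opposite.unop V)) f),
   fun V u v => comp_elMeet (prod.map (𝟙 (Opposite.unop V)) f) u v,
   fun V u v => comp_elJoin (prod.map (𝟙 (Opposite.unop V)) f) u v⟩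

/-- Beck–Chevalley-type consequence: on opens pulled back from a coequalizing map,
`p* ∘ p₊` is the identity. -/
lemma factB {W : C} (q : Z ⟶ W)
    (hq : pullback.fst p p ≫ q = pullback.snd p p ≫ q)
    (hta : IsTriqAssign p ph)
    (hsec : powMap (Sierp C) p ≫ ph = 𝟙 (pow (Sierp C) Y)) :
    powMap (Sierp C) q ≫ ph ≫ powMap (Sierp C) p = powMap (Sierp C) q := by
  -- the kernel pair as an equalizer
  have weq : prod.lift (pullback.fst p p) (pullback.snd p p) ≫ (prod.fst ≫ p)
      = prod.lift (pullback.fst p p) (pullback.snd p p) ≫ (prod.snd ≫ p) := by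
    rw [prod.lift_fst_assoc, prod.lift_snd_assoc]
    exact pullback.condition
  have hlim : Nonempty (IsLimit (Fork.ofι
      (prod.lift (pullback.fst p p) (pullback.snd p p)) weq)) := by
    constructor
    refine Fork.IsLimit.mk _
      (fun s => pullback.lift (s.ι ≫ prod.fst) (s.ι ≫ prod.snd)
        (by rw [Category.assoc, Category.assoc]; exact s.condition))
      (fun s => ?_) (fun s m hm => ?_)
    · apply Limits.prod.hom_ext
      · rw [Fork.ι_ofι, Category.assoc, prod.lift_fst, pullback.lift_fst]
      · rw [Fork.ι_ofι, Category.assoc, prod.lift_snd, pullback.lift_snd]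
    · apply pullback.hom_ext
      · rw [pullback.lift_fst]
        have := congrArg (fun k => k ≫ (prod.fst : Z ⨯ Z ⟶ Z)) hm
        simpa [Fork.ι_ofι, prod.lift_fst] using this
      · rw [pullback.lift_snd]
        have := congrArg (fun k => k ≫ (prod.snd : Z ⨯ Z ⟶ Z)) hm
        simpa [Fork.ι_ofι, prod.lift_snd] using this
  obtain ⟨κ', hκ', -⟩ := (SC.ax7 (prod.lift (pullback.fst p p) (pullback.snd p p))
      (prod.fst ≫ p) (prod.snd ≫ p) weq hlim).2 (kappa p ph) (kappa_coeq p ph hta hsec)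
  apply NatTrans.ext
  funext V; ext t
  change (Opposite.unop V ⨯ W ⟶ SC.S) at t
  show prod.map (𝟙 (Opposite.unop V)) p ≫
      ph.app V (prod.map (𝟙 (Opposite.unop V)) q ≫ t)
    = prod.map (𝟙 (Opposite.unop V)) q ≫ t
  set a : Opposite.unop V ⨯ Z ⟶ SC.S := prod.map (𝟙 (Opposite.unop V)) q ≫ t with ha
  -- Claim 1 : κ (a ∘ snd) = p* (ph a)
  have c1 : (kappa p ph).app V (prod.map (𝟙 _) prod.snd ≫ a)
      = prod.map (𝟙 _) p ≫ ph.app V a := by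
    show grHom p (Opposite.unop V) ≫ ph.app (Opposite.op (Opposite.unop V ⨯ Z))
        (ascHom (Opposite.unop V) Z ≫ prod.map (𝟙 _) prod.snd ≫ a)
      = prod.map (𝟙 _) p ≫ ph.app V a
    have e1 : ascHom (Opposite.unop V) Z ≫ prod.map (𝟙 (Opposite.unop V)) prod.snd
        = prod.map prod.fst (𝟙 Z) := by
      apply Limits.prod.hom_ext <;>
        simp [ascHom, prod.lift_fst, prod.lift_snd, prod.map_fst, prod.map_snd,
          prod.lift_fst_assoc, prod.lift_snd_assoc, prod.map_fst_assoc, prod.map_snd_assoc]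
    have e1' : ascHom (Opposite.unop V) Z ≫ prod.map (𝟙 (Opposite.unop V)) prod.snd ≫ a
        = prod.map prod.fst (𝟙 Z) ≫ a := by
      rw [← Category.assoc, e1]
    erw [e1']
    have e2 : ph.app (Opposite.op (Opposite.unop V ⨯ Z)) (prod.map prod.fst (𝟙 Z) ≫ a)
        = prod.map prod.fst (𝟙 Y) ≫ ph.app V a :=
      types_congr_hom (ph.naturality (prod.fst : Opposite.unop V ⨯ Z ⟶ Opposite.unop V).op) a
    erw [e2]
    have e3 : grHom p (Opposite.unop V) ≫ prod.map prod.fst (𝟙 Y)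
        = prod.map (𝟙 (Opposite.unop V)) p := by
      apply Limits.prod.hom_ext <;>
        simp [grHom, prod.lift_fst, prod.lift_snd, prod.map_fst, prod.map_snd,
          prod.lift_fst_assoc, prod.lift_snd_assoc, prod.map_fst_assoc, prod.map_snd_assoc]
    erw [← Category.assoc, e3]
  -- Claim 2 : κ (a ∘ fst) = a
  have c2 : (kappa p ph).app V (prod.map (𝟙 _) prod.fst ≫ a) = a := by
    show grHom p (Opposite.unop V) ≫ ph.app (Opposite.op (Opposite.unop V ⨯ Z))
        (ascHom (Opposite.unop V) Z ≫ prod.map (𝟙 _) prod.fst ≫ a)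
      = a
    have e1 : ascHom (Opposite.unop V) Z ≫ prod.map (𝟙 (Opposite.unop V)) prod.fst
        = (prod.fst : (Opposite.unop V ⨯ Z) ⨯ Z ⟶ Opposite.unop V ⨯ Z) := by
      apply Limits.prod.hom_ext <;>
        simp [ascHom, prod.lift_fst, prod.lift_snd, prod.map_fst, prod.map_snd,
          prod.lift_fst_assoc, prod.lift_snd_assoc, prod.map_fst_assoc, prod.map_snd_assoc]
    have e1' : ascHom (Opposite.unop V) Z ≫ prod.map (𝟙 (Opposite.unop V)) prod.fst ≫ a
        = prod.fst ≫ a := by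
      rw [← Category.assoc, e1]
    erw [e1']
    have e2 : ph.app (Opposite.op (Opposite.unop V ⨯ Z))
        ((prod.fst : (Opposite.unop V ⨯ Z) ⨯ Z ⟶ _) ≫ a)
        = (prod.fst : (Opposite.unop V ⨯ Z) ⨯ Y ⟶ _) ≫ a := by
      have e2a : prod.map (𝟙 (Opposite.unop V ⨯ Z)) p ≫
          ((prod.fst : (Opposite.unop V ⨯ Z) ⨯ Y ⟶ _) ≫ a)
          = (prod.fst : (Opposite.unop V ⨯ Z) ⨯ Z ⟶ _) ≫ a := by
        rw [← Category.assoc, prod.map_fst, Category.comp_id]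
      erw [← e2a]
      exact sec_app p ph hsec (Opposite.op (Opposite.unop V ⨯ Z)) (prod.fst ≫ a)
    erw [e2, ← Category.assoc, grHom, prod.lift_fst, Category.id_comp]
  -- Claim 3 : the two elements agree after restriction along the equalizer
  have pm : ∀ {P Q R : C} (f : P ⟶ Q) (g : Q ⟶ R) (x : Opposite.unop V ⨯ R ⟶ SC.S),
      prod.map (𝟙 (Opposite.unop V)) f ≫ prod.map (𝟙 _) g ≫ x
        = prod.map (𝟙 _) (f ≫ g) ≫ x := by
    intro P Q R f g x
    rw [← Category.assoc, prod.map_map, Category.id_comp]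
  have c3 : prod.map (𝟙 (Opposite.unop V)) (prod.lift (pullback.fst p p) (pullback.snd p p))
        ≫ prod.map (𝟙 _) prod.snd ≫ a
      = prod.map (𝟙 (Opposite.unop V)) (prod.lift (pullback.fst p p) (pullback.snd p p))
        ≫ prod.map (𝟙 _) prod.fst ≫ a := by
    rw [ha, pm, pm, pm, pm, prod.lift_snd, prod.lift_fst, hq]
  -- conclude
  have k1 := types_congr_hom (NatTrans.congr_app hκ' V) (prod.map (𝟙 _) prod.snd ≫ a)
  have k2 := types_congr_hom (NatTrans.congr_app hκ' V) (prod.map (𝟙 _) prod.fst ≫ a)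
  exact c1.symm.trans (k1.trans ((congrArg (fun x => κ'.app V x) c3).trans
    (k2.symm.trans c2)))

end FactB

end RegularEpiAux

/-- In a category of spaces every triquotient surjection is a regular epimorphism: it is
the coequalizer of its kernel pair. -/
theorem triquotient_surjection_regular_epi {Z Y : C} (p : Z ⟶ Y) (hp : IsTriqSurj p) :
    Nonempty (IsColimit (Cofork.ofπ p (pullback.condition (f := p) (g := p)))) := by
  obtain ⟨ph, hta, hsec⟩ := hp
  constructor
  apply Cofork.IsColimit.ofExistsUnique
  intro s
  have hq : pullback.fst p p ≫ s.π = pullback.snd p p ≫ s.π := s.condition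
  have hB := factB p ph s.π hq hta hsec
  -- injectivity of p*
  have inj : ∀ (V : Cᵒᵖ) (x y : Opposite.unop V ⨯ Y ⟶ SC.S),
      prod.map (𝟙 _) p ≫ x = prod.map (𝟙 _) p ≫ y → x = y := by
    intro V x y hxy
    have hx := sec_app p ph hsec V x
    have hy := sec_app p ph hsec V y
    erw [← hx, ← hy, hxy]
    exact rfl
  -- Fact B, componentwise
  have fB : ∀ (V : Cᵒᵖ) (t : Opposite.unop V ⨯ s.pt ⟶ SC.S),
      prod.map (𝟙 _) p ≫ ph.app V (prod.map (𝟙 _) s.π ≫ t)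
        = prod.map (𝟙 _) s.π ≫ t := fun V t =>
    types_congr_hom (NatTrans.congr_app hB V) t
  -- the composite `S^q ≫ ph` is a DL-homomorphism
  have hdl : IsDLHom SC.top SC.bot SC.meet SC.join (powMap (Sierp C) s.π ≫ ph) := by
    refine ⟨fun V => ?_, fun V => ?_, fun V u v => ?_, fun V u v => ?_⟩
    · show ph.app V (prod.map (𝟙 _) s.π ≫ elTop SC.top) = elTop SC.top
      refine inj V _ _ ?_
      erw [fB V (elTop SC.top), comp_elTop, comp_elTop]
    · show ph.app V (prod.map (𝟙 _) s.π ≫ elBot SC.bot) = elBot SC.bot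
      refine inj V _ _ ?_
      erw [fB V (elBot SC.bot), comp_elBot, comp_elBot]
    · show ph.app V (prod.map (𝟙 _) s.π ≫ elMeet SC.meet u v)
        = elMeet SC.meet (ph.app V (prod.map (𝟙 _) s.π ≫ u))
            (ph.app V (prod.map (𝟙 _) s.π ≫ v))
      refine inj V _ _ ?_
      erw [fB V (elMeet SC.meet u v), comp_elMeet, comp_elMeet, fB V u, fB V v]
    · show ph.app V (prod.map (𝟙 _) s.π ≫ elJoin SC.join u v)
        = elJoin SC.join (ph.app V (prod.map (𝟙 _) s.π ≫ u))
            (ph.app V (prod.map (𝟙 _) s.π ≫ v))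
      refine inj V _ _ ?_
      erw [fB V (elJoin SC.join u v), comp_elJoin, comp_elJoin, fB V u, fB V v]
  obtain ⟨g, hg, -⟩ := SC.ax5 (powMap (Sierp C) s.π ≫ ph) hdl
  have hfac : p ≫ g = s.π := by
    have h1 : powMap (Sierp C) s.π = powMap (Sierp C) (p ≫ g) := by
      rw [powMap_comp]
      calc powMap (Sierp C) s.π
          = (powMap (Sierp C) s.π ≫ ph) ≫ powMap (Sierp C) p := by
            rw [Category.assoc]; exact hB.symm
        _ = powMap (Sierp C) g ≫ powMap (Sierp C) p :=
            congrArg (fun k => k ≫ powMap (Sierp C) p) hg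
    exact (SC.ax5 (powMap (Sierp C) s.π) (powMap_isDLHom s.π)).unique h1 rfl
  refine ⟨g, ?_, ?_⟩
  · simpa using hfac
  · intro m hm
    have hm' : p ≫ m = s.π := by simpa using hm
    have e1 : powMap (Sierp C) m = powMap (Sierp C) s.π ≫ ph := by
      have h2 : powMap (Sierp C) (p ≫ m) ≫ ph = powMap (Sierp C) s.π ≫ ph := by rw [hm']
      rw [powMap_comp, Category.assoc, hsec, Category.comp_id] at h2
      exact h2
    exact (SC.ax5 (powMap (Sierp C) s.π ≫ ph) hdl).unique e1.symm hg
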